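/- Let W : [0,T] → ℝ be continuous and let 0 < x < y. Suppose X, Y : [0,T] → ℝ solve X' = 2/(X - W), Y' = 2/(Y - W) with X(0)=x, Y(0)=y and W(t) < X(t) < Y(t) on [0,T], and suppose P, Q : [0,T] → (0,∞) solve P'(t) = -2P(t)/(X(t)-W(t))², Q'(t) = -2Q(t)/(Y(t)-W(t))², with P(0) = Q(0) = 1. Define J(t) = P(t)Q(t)/(Y(t)-X(t))². Then J satisfies J'(t) = -2J(t) · (1/(X(t)-W(t)) - 1/(Y(t)-W(t)))², and consequently J is nonincreasing on [0,T], so J(t) ≤ J(0) = 1/(y-x)² for all t. -/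

import Mathlib

/-!
With `a = X - W` and `b = Y - W`, the logarithmic derivative of `J = P Q / (Y - X)²` is
`-2/a² - 2/b² - 2 (2/b - 2/a)/(b - a) = -2/a² - 2/b² + 4/(ab) = -2 (1/a - 1/b)²`,
which is nonpositive; since `J > 0`, `J` decreases, and `J(0) = 1/(y - x)²`.
-/

open Set

theorem hasDerivAt_loewner_poissonKernel {X Y P Q : ℝ → ℝ} {t w : ℝ}
    (hX : HasDerivAt X (2 / (X t - w)) t) (hY : HasDerivAt Y (2 / (Y t - w)) t)
    (hP : HasDerivAt P (-2 * P t / (X t - w) ^ 2) t)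
    (hQ : HasDerivAt Q (-2 * Q t / (Y t - w) ^ 2) t)
    (hwX : w < X t) (hXY : X t < Y t) :
    HasDerivAt (fun s => P s * Q s / (Y s - X s) ^ 2)
      (-2 * (P t * Q t / (Y t - X t) ^ 2) * (1 / (X t - w) - 1 / (Y t - w)) ^ 2) t := by
  have hXw : X t - w ≠ 0 := sub_ne_zero.2 hwX.ne'
  have hYw : Y t - w ≠ 0 := sub_ne_zero.2 (hwX.trans hXY).ne'
  have hYX : Y t - X t ≠ 0 := sub_ne_zero.2 hXY.ne'
  have hJ : HasDerivAt (fun s => P s * Q s / (Y s - X s) ^ 2) _ t :=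
    (hP.mul hQ).div ((hY.sub hX).pow 2) (pow_ne_zero 2 hYX)
  refine hJ.congr_deriv ?_
  simp only [Pi.mul_apply, Pi.sub_apply, Nat.cast_ofNat]
  field_simp
  ring

theorem antitoneOn_of_hasDerivAt_nonpos {D : Set ℝ} (hD : Convex ℝ D) {f f' : ℝ → ℝ}
    (hf : ∀ x ∈ D, HasDerivAt f (f' x) x) (hf' : ∀ x ∈ D, f' x ≤ 0) : AntitoneOn f D :=
  antitoneOn_of_hasDerivWithinAt_nonpos hD (fun x hx => (hf x hx).continuousAt.continuousWithinAt)
    (fun x hx => (hf x (interior_subset hx)).hasDerivWithinAt)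
    (fun x hx => hf' x (interior_subset hx))

theorem loewner_poisson_kernel_decreasing_general (T : ℝ) (hT : 0 ≤ T)
    (W X Y P Q : ℝ → ℝ) (x y : ℝ)
    (hX : ∀ t ∈ Set.Icc (0 : ℝ) T, HasDerivAt X (2 / (X t - W t)) t)
    (hY : ∀ t ∈ Set.Icc (0 : ℝ) T, HasDerivAt Y (2 / (Y t - W t)) t)
    (hX0 : X 0 = x) (hY0 : Y 0 = y)
    (hord : ∀ t ∈ Set.Icc (0 : ℝ) T, W t < X t ∧ X t < Y t)
    (hPpos : ∀ t ∈ Set.Icc (0 : ℝ) T, 0 < P t)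
    (hQpos : ∀ t ∈ Set.Icc (0 : ℝ) T, 0 < Q t)
    (hP : ∀ t ∈ Set.Icc (0 : ℝ) T,
      HasDerivAt P (-2 * P t / (X t - W t) ^ 2) t)
    (hQ : ∀ t ∈ Set.Icc (0 : ℝ) T,
      HasDerivAt Q (-2 * Q t / (Y t - W t) ^ 2) t)
    (hP0 : P 0 = 1) (hQ0 : Q 0 = 1) :
    (∀ t ∈ Set.Icc (0 : ℝ) T,
      HasDerivAt (fun s => P s * Q s / (Y s - X s) ^ 2)
        (-2 * (P t * Q t / (Y t - X t) ^ 2) *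
          (1 / (X t - W t) - 1 / (Y t - W t)) ^ 2) t) ∧
    (∀ s ∈ Set.Icc (0 : ℝ) T, ∀ t ∈ Set.Icc (0 : ℝ) T, s ≤ t →
      P t * Q t / (Y t - X t) ^ 2 ≤ P s * Q s / (Y s - X s) ^ 2) ∧
    (∀ t ∈ Set.Icc (0 : ℝ) T,
      P t * Q t / (Y t - X t) ^ 2 ≤ 1 / (y - x) ^ 2) := by
  have hderiv : ∀ t ∈ Icc (0 : ℝ) T, HasDerivAt (fun s => P s * Q s / (Y s - X s) ^ 2)
      (-2 * (P t * Q t / (Y t - X t) ^ 2) * (1 / (X t - W t) - 1 / (Y t - W t)) ^ 2) t :=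
    fun t ht => hasDerivAt_loewner_poissonKernel (hX t ht) (hY t ht) (hP t ht) (hQ t ht)
      (hord t ht).1 (hord t ht).2
  have hanti : AntitoneOn (fun s => P s * Q s / (Y s - X s) ^ 2) (Icc 0 T) :=
    antitoneOn_of_hasDerivAt_nonpos (convex_Icc 0 T) hderiv fun t ht => by
      have hJ : 0 ≤ P t * Q t / (Y t - X t) ^ 2 := by
        have := hPpos t ht; have := hQpos t ht; positivity
      nlinarith [sq_nonneg (1 / (X t - W t) - 1 / (Y t - W t))]
  refine ⟨hderiv, fun s hs t ht hst => hanti hs ht hst, fun t ht => ?_⟩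
  simpa [hP0, hQ0, hX0, hY0] using hanti ⟨le_rfl, hT⟩ ht ht.1

/-- Monotonicity of the boundary Poisson-kernel quantity
`J = P Q / (Y - X)²` along the chordal Loewner flow:
`J' = -2J (1/(X-W) - 1/(Y-W))²`, so `J` is nonincreasing and
`J(t) ≤ J(0) = 1/(y-x)²`. -/
theorem loewner_poisson_kernel_decreasing (T : ℝ) (hT : 0 ≤ T)
    (W X Y P Q : ℝ → ℝ) (x y : ℝ) (hx : 0 < x) (hxy : x < y)
    (hW : ContinuousOn W (Set.Icc 0 T))
    (hX : ∀ t ∈ Set.Icc (0 : ℝ) T, HasDerivAt X (2 / (X t - W t)) t)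
    (hY : ∀ t ∈ Set.Icc (0 : ℝ) T, HasDerivAt Y (2 / (Y t - W t)) t)
    (hX0 : X 0 = x) (hY0 : Y 0 = y)
    (hord : ∀ t ∈ Set.Icc (0 : ℝ) T, W t < X t ∧ X t < Y t)
    (hPpos : ∀ t ∈ Set.Icc (0 : ℝ) T, 0 < P t)
    (hQpos : ∀ t ∈ Set.Icc (0 : ℝ) T, 0 < Q t)
    (hP : ∀ t ∈ Set.Icc (0 : ℝ) T,
      HasDerivAt P (-2 * P t / (X t - W t) ^ 2) t)
    (hQ : ∀ t ∈ Set.Icc (0 : ℝ) T,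
      HasDerivAt Q (-2 * Q t / (Y t - W t) ^ 2) t)
    (hP0 : P 0 = 1) (hQ0 : Q 0 = 1) :
    (∀ t ∈ Set.Icc (0 : ℝ) T,
      HasDerivAt (fun s => P s * Q s / (Y s - X s) ^ 2)
        (-2 * (P t * Q t / (Y t - X t) ^ 2) *
          (1 / (X t - W t) - 1 / (Y t - W t)) ^ 2) t) ∧
    (∀ s ∈ Set.Icc (0 : ℝ) T, ∀ t ∈ Set.Icc (0 : ℝ) T, s ≤ t →
      P t * Q t / (Y t - X t) ^ 2 ≤ P s * Q s / (Y s - X s) ^ 2) ∧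
    (∀ t ∈ Set.Icc (0 : ℝ) T,
      P t * Q t / (Y t - X t) ^ 2 ≤ 1 / (y - x) ^ 2) :=
  loewner_poisson_kernel_decreasing_general T hT W X Y P Q x y hX hY hX0 hY0 hord hPpos hQpos hP hQ
    hP0 hQ0
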